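/- For a Pauli-string Hamiltonian H(W) = Σ_{P₁…Pₙ ∈ {I,X,Y,Z}} w_{P₁…Pₙ} σ_{P₁}⊗…⊗σ_{Pₙ}, the quantity ‖H(W)‖_{L̃} := 2 max_{i=1,…,n} Σ_{P₁…Pₙ : Pᵢ ≠ I} |w_{P₁…Pₙ}| is an upper bound on the quantum Lipschitz constant: ‖H(W)‖_L ≤ ‖H(W)‖_{L̃}. -/

import Mathlib

open scoped BigOperators ComplexOrder

/-- Matrices acting on `n` qubits. -/
abbrev QMat (n : ℕ) := Matrix (Fin n → Fin 2) (Fin n → Fin 2) ℂ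

/-- The operator norm (maximal absolute value of the eigenvalues) of a Hermitian matrix. -/
noncomputable def opNorm {n : ℕ} (X : QMat n) : ℝ :=
  if h : X.IsHermitian then ⨆ i, |h.eigenvalues i| else 0

/-- `H` acts as the identity on qubit `i`, i.e. `H = H̃ ⊗ I_i`. -/
def actsIdOn {n : ℕ} (i : Fin n) (H : QMat n) : Prop :=
  ∀ a b : Fin n → Fin 2,
    H a b = if a i = b i then H (Function.update a i 0) (Function.update b i 0) else 0

/-- The quantum Lipschitz constant
`‖H‖_L = 2 maxᵢ min { ‖H − H̃‖_∞ : H̃ acts as the identity on qubit i }`. -/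
noncomputable def lipConst {n : ℕ} (H : QMat n) : ℝ :=
  2 * ⨆ i : Fin n,
    sInf { r | ∃ K : QMat n, K.IsHermitian ∧ actsIdOn i K ∧ r = opNorm (H - K) }

/-- The identity and the three Pauli matrices. -/
noncomputable def pauli : Fin 4 → Matrix (Fin 2) (Fin 2) ℂ
  | 0 => 1
  | 1 => !![0, 1; 1, 0]
  | 2 => !![0, -Complex.I; Complex.I, 0]
  | 3 => !![1, 0; 0, -1]

/-- The Pauli string `σ_{P₁} ⊗ ⋯ ⊗ σ_{Pₙ}`. -/
noncomputable def pauliString {n : ℕ} (P : Fin n → Fin 4) : QMat n :=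
  fun a b => ∏ j, pauli (P j) (a j) (b j)

/-- The Pauli-string Hamiltonian `H(W) = Σ_P w_P σ_{P₁} ⊗ ⋯ ⊗ σ_{Pₙ}`. -/
noncomputable def hamW {n : ℕ} (w : (Fin n → Fin 4) → ℝ) : QMat n :=
  ∑ P, (w P : ℂ) • pauliString P

/-- The approximated Lipschitz quantity
`‖H(W)‖_L̃ = 2 maxᵢ Σ_{P : Pᵢ ≠ I} |w_P|`. -/
noncomputable def Ltilde {n : ℕ} (w : (Fin n → Fin 4) → ℝ) : ℝ :=
  2 * ⨆ i : Fin n, ∑ P ∈ Finset.univ.filter (fun P : Fin n → Fin 4 => P i ≠ 0), |w P|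

/-! For each qubit `i`, split `H(W)` into the Pauli strings acting trivially on `i` and the
rest. The first part `K` is Hermitian and acts as the identity on qubit `i`, and
`H(W) - K = Σ_{Pᵢ ≠ I} w_P σ_P`. Its eigenvalues are bounded by its `ℓ²` operator norm, which
is subadditive and equals `1` on each Pauli string, a Hermitian unitary; hence
`‖H(W) - K‖_∞ ≤ Σ_{Pᵢ ≠ I} |w_P|`. -/

open Finset
open scoped Matrix Matrix.Norms.L2Operator

namespace Matrix

variable {ι κ R : Type*} [Fintype ι] [CommSemiring R]

def piKron (M : ι → Matrix κ κ R) : Matrix (ι → κ) (ι → κ) R :=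
  fun a b => ∏ j, M j (a j) (b j)

lemma piKron_mul [DecidableEq ι] [Fintype κ] (M N : ι → Matrix κ κ R) :
    piKron M * piKron N = piKron (M * N) := by
  ext a b
  simp only [mul_apply, piKron, Pi.mul_apply, ← prod_mul_distrib, Fintype.prod_sum]

lemma piKron_one [DecidableEq ι] [DecidableEq κ] :
    piKron (fun _ : ι => (1 : Matrix κ κ R)) = 1 := by
  ext a b
  simp only [piKron, one_apply, Fintype.prod_boole, funext_iff]

lemma piKron_conjTranspose [StarRing R] (M : ι → Matrix κ κ R) :
    (piKron M)ᴴ = piKron fun j => (M j)ᴴ := by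
  ext a b
  simp only [conjTranspose_apply, piKron, star_prod]

end Matrix

lemma Matrix.IsHermitian.abs_eigenvalues_le_norm {ι 𝕜 : Type*} [Fintype ι] [DecidableEq ι]
    [RCLike 𝕜] {A : Matrix ι ι 𝕜} (hA : A.IsHermitian) (i : ι) :
    |hA.eigenvalues i| ≤ ‖A‖ := by
  have : Nonempty ι := ⟨i⟩
  have hmem : (hA.eigenvalues i : 𝕜) ∈ spectrum 𝕜 A :=
    hA.spectrum_eq_image_range ▸ ⟨_, ⟨i, rfl⟩, rfl⟩
  simpa only [RCLike.norm_ofReal] using spectrum.norm_le_norm_of_mem hmem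

lemma opNorm_nonneg {n : ℕ} (X : QMat n) : 0 ≤ opNorm X := by
  rw [opNorm]
  split_ifs
  exacts [Real.iSup_nonneg fun _ => abs_nonneg _, le_rfl]

lemma opNorm_le_norm {n : ℕ} (X : QMat n) : opNorm X ≤ ‖X‖ := by
  rw [opNorm]
  split_ifs with hX
  exacts [ciSup_le hX.abs_eigenvalues_le_norm, norm_nonneg X]

lemma lipConst_le_two_mul_iSup {n : ℕ} (H : QMat n) (c : Fin n → ℝ)
    (hc : ∀ i, ∃ K : QMat n, K.IsHermitian ∧ actsIdOn i K ∧ opNorm (H - K) ≤ c i) :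
    lipConst H ≤ 2 * ⨆ i, c i := by
  refine mul_le_mul_of_nonneg_left ?_ zero_le_two
  refine ciSup_mono (Set.finite_range c).bddAbove fun i => ?_
  obtain ⟨K, hK, hKi, hHK⟩ := hc i
  refine csInf_le_of_le ⟨0, ?_⟩ ⟨K, hK, hKi, rfl⟩ hHK
  rintro _ ⟨K', -, -, rfl⟩
  exact opNorm_nonneg _

lemma actsIdOn_piKron {n : ℕ} {i : Fin n} {M : Fin n → Matrix (Fin 2) (Fin 2) ℂ}
    (hM : M i = 1) : actsIdOn i (Matrix.piKron M) := by
  intro a b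
  split_ifs with hab
  · refine prod_congr rfl fun j _ => ?_
    rcases eq_or_ne j i with rfl | hj
    · simp only [hM, hab, Function.update_self, Matrix.one_apply_eq]
    · simp only [Function.update_of_ne hj]
  · exact prod_eq_zero (mem_univ i) (by simp [hM, Matrix.one_apply_ne hab])

lemma actsIdOn_sum_smul {n : ℕ} {ι : Type*} {i : Fin n} {s : Finset ι} (c : ι → ℂ)
    {K : ι → QMat n} (hK : ∀ j ∈ s, actsIdOn i (K j)) :
    actsIdOn i (∑ j ∈ s, c j • K j) := by
  intro a b
  simp only [Matrix.sum_apply, Matrix.smul_apply]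
  split_ifs with hab
  · exact sum_congr rfl fun j hj => by rw [hK j hj a b, if_pos hab]
  · exact sum_eq_zero fun j hj => by rw [hK j hj a b, if_neg hab, smul_zero]

lemma pauli_isHermitian (q : Fin 4) : (pauli q).IsHermitian := by
  fin_cases q <;> ext a b <;> fin_cases a <;> fin_cases b <;> simp [pauli]

lemma pauli_mul_self (q : Fin 4) : pauli q * pauli q = 1 := by
  fin_cases q <;> ext a b <;> fin_cases a <;> fin_cases b <;>
    simp [pauli, Matrix.mul_apply, Matrix.one_apply]

lemma pauliString_eq_piKron {n : ℕ} (P : Fin n → Fin 4) :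
    pauliString P = Matrix.piKron (pauli ∘ P) :=
  rfl

lemma pauliString_isHermitian {n : ℕ} (P : Fin n → Fin 4) : (pauliString P).IsHermitian := by
  rw [Matrix.IsHermitian, pauliString_eq_piKron, Matrix.piKron_conjTranspose]
  exact congrArg Matrix.piKron (funext fun j => (pauli_isHermitian (P j)).eq)

lemma pauliString_mul_self {n : ℕ} (P : Fin n → Fin 4) : pauliString P * pauliString P = 1 := by
  rw [pauliString_eq_piKron, Matrix.piKron_mul, ← Matrix.piKron_one]
  exact congrArg Matrix.piKron (funext fun j => pauli_mul_self (P j))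

lemma norm_pauliString {n : ℕ} (P : Fin n → Fin 4) : ‖pauliString P‖ = 1 := by
  refine CStarRing.norm_of_mem_unitary (Matrix.mem_unitaryGroup_iff'.2 ?_)
  rw [Matrix.star_eq_conjTranspose, (pauliString_isHermitian P).eq, pauliString_mul_self]

lemma actsIdOn_pauliString {n : ℕ} {i : Fin n} {P : Fin n → Fin 4} (hP : P i = 0) :
    actsIdOn i (pauliString P) :=
  actsIdOn_piKron (by simp [hP, pauli])

lemma isHermitian_sum_smul_pauliString {n : ℕ} (s : Finset (Fin n → Fin 4))
    (w : (Fin n → Fin 4) → ℝ) : (∑ P ∈ s, (w P : ℂ) • pauliString P).IsHermitian :=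
  isSelfAdjoint_sum s fun P _ => (pauliString_isHermitian P).smul (Complex.conj_ofReal _)

lemma norm_sum_smul_pauliString_le {n : ℕ} (s : Finset (Fin n → Fin 4))
    (w : (Fin n → Fin 4) → ℝ) :
    ‖∑ P ∈ s, (w P : ℂ) • pauliString P‖ ≤ ∑ P ∈ s, |w P| :=
  (norm_sum_le _ _).trans_eq <| sum_congr rfl fun P _ => by
    rw [norm_smul, norm_pauliString, mul_one, Complex.norm_real, Real.norm_eq_abs]

/-- `‖H(W)‖_L̃` is an upper bound on the quantum Lipschitz constant of the Pauli-string
Hamiltonian `H(W)`: `‖H(W)‖_L ≤ ‖H(W)‖_L̃`. -/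
theorem lipConst_le_Ltilde (n : ℕ) (w : (Fin n → Fin 4) → ℝ) :
    lipConst (hamW w) ≤ Ltilde w := by
  refine lipConst_le_two_mul_iSup _ _ fun i =>
    ⟨∑ P ∈ univ.filter (· i = 0), (w P : ℂ) • pauliString P,
      isHermitian_sum_smul_pauliString _ w,
      actsIdOn_sum_smul _ fun P hP => actsIdOn_pauliString (mem_filter.1 hP).2, ?_⟩
  rw [hamW, ← sum_filter_add_sum_filter_not univ (· i = 0), add_sub_cancel_left]
  exact (opNorm_le_norm _).trans (norm_sum_smul_pauliString_le _ w)
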